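/- arXiv:1505.02150 — 3 statements merged into one kernel-verified Lean document; each statement's English description precedes it below -/
import Mathlib

section
/- For every ε > 0 there exists a constant C(ε) > 0 such that for all real X ≥ 1 and all positive integers q ≤ X, the number of positive integers n ≤ X having the same set of prime divisors as q (that is, with rad(n) = rad(q)) is at most C(ε) X^{ε}. -/
open scoped BigOperators

/-- `e(x) = exp(2 π i x)`. -/
noncomputable def eC (x : ℝ) : ℂ := Complex.exp (2 * Real.pi * Complex.I * x)

/-- The GL(3) long-element Kloosterman sum `S(m₁,m₂,n₁,n₂;D₁,D₂)`.
Since the summand is independent of the admissible choices of `Y₁,Z₁,Y₂,Z₂`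
(and each admissible `(B₁,C₁)` has exactly `D₁` admissible pairs `(Y₁,Z₁)` modulo `D₁`,
similarly for `(Y₂,Z₂)`), we define the sum by averaging over all admissible choices. -/
noncomputable def SGL3 (m1 m2 n1 n2 : ℤ) (D1 D2 : ℕ) : ℂ :=
  ((D1 : ℂ) * (D2 : ℂ))⁻¹ *
    ∑ B1 ∈ Finset.range D1, ∑ C1 ∈ Finset.range D1,
      ∑ B2 ∈ Finset.range D2, ∑ C2 ∈ Finset.range D2,
        ∑ Y1 ∈ Finset.range D1, ∑ Z1 ∈ Finset.range D1,
          ∑ Y2 ∈ Finset.range D2, ∑ Z2 ∈ Finset.range D2,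
            if Nat.gcd B1 (Nat.gcd C1 D1) = 1 ∧ Nat.gcd B2 (Nat.gcd C2 D2) = 1 ∧
                ((D1 : ℤ) * (D2 : ℤ)) ∣ ((D1 : ℤ) * (C2 : ℤ) + (B1 : ℤ) * (B2 : ℤ) + (C1 : ℤ) * (D2 : ℤ)) ∧
                (D1 : ℤ) ∣ ((Y1 : ℤ) * (B1 : ℤ) + (Z1 : ℤ) * (C1 : ℤ) - 1) ∧
                (D2 : ℤ) ∣ ((Y2 : ℤ) * (B2 : ℤ) + (Z2 : ℤ) * (C2 : ℤ) - 1) then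
              eC (((m1 * (B1 : ℤ) + n1 * ((Y1 : ℤ) * (D2 : ℤ) - (Z1 : ℤ) * (B2 : ℤ)) : ℤ) : ℝ) / (D1 : ℝ)) *
                eC (((m2 * (B2 : ℤ) + n2 * ((Y2 : ℤ) * (D1 : ℤ) - (Z2 : ℤ) * (B1 : ℤ)) : ℤ) : ℝ) / (D2 : ℝ))
            else 0

/-- The classical Kloosterman sum `S(m,n;c) = ∑_{x (c), (x,c)=1} e((m x + n x̄)/c)`. -/
noncomputable def Kl (m n : ℤ) (c : ℕ) : ℂ :=
  ∑ x ∈ Finset.range c,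
    if Nat.gcd x c = 1 then
      eC (((m * (x : ℤ) + n * ((((x : ZMod c)⁻¹).val : ℕ) : ℤ) : ℤ) : ℝ) / (c : ℝ))
    else 0

/-- The partial (middle two-variable) Fourier transform of the GL(3) Kloosterman sum. -/
noncomputable def Shat (a u t b : ℤ) (D1 D2 : ℕ) : ℂ :=
  ((D1 : ℂ) * (D2 : ℂ))⁻¹ *
    ∑ x ∈ Finset.range D1, ∑ y ∈ Finset.range D2,
      SGL3 a (y : ℤ) (x : ℤ) b D1 D2 * eC (((-((x : ℤ) * t) : ℤ) : ℝ) / (D1 : ℝ)) *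
        eC (((-((y : ℤ) * u) : ℤ) : ℝ) / (D2 : ℝ))

/-- `R(t,D₁,D₂) = max_{(ab,D₁)=1} ∑_{u (D₂)} |Ŝ(a,u,bt,1,D₁,D₂)|`, realized as a supremum. -/
noncomputable def Rfun (t : ℤ) (D1 D2 : ℕ) : ℝ :=
  sSup {r : ℝ | ∃ a b : ℤ, Int.gcd (a * b) D1 = 1 ∧
    r = ∑ u ∈ Finset.range D2, ‖Shat a (u : ℤ) (b * t) 1 D1 D2‖}

/-- The quantity `M(β)` with outer sum over `q ≤ Q` and moduli `c ≤ X/q`. -/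
noncomputable def Mgen (Q X : ℝ) (β : ℕ → ℂ) : ℝ :=
  ∑ q ∈ Finset.Icc 1 ⌊Q⌋₊, ∑ d1 ∈ q.divisors,
    ((d1 : ℝ) / (q : ℝ)) *
      ∑ c ∈ Finset.Icc 1 ⌊X / (q : ℝ)⌋₊,
        if Nat.gcd c q = 1 then
          ∑ tt ∈ Finset.range c,
            if Nat.gcd tt c = 1 then
              (‖∑ᶠ (n : ℕ) (_ : Nat.gcd n q = d1),
                β n * eC (((tt * n : ℕ) : ℝ) / (c : ℝ))‖) ^ 2
            else 0
        else 0

/-- The bilinear form `𝒮 = ∑_{D₁,D₂,m,n} γ_{D₁,D₂} α_m β_n S(1,m,n,1;D₁,D₂)`. -/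
noncomputable def Sbil (γ : ℕ → ℕ → ℂ) (α β : ℕ → ℂ) : ℂ :=
  ∑ᶠ (D1 : ℕ) (D2 : ℕ) (m : ℕ) (n : ℕ),
    γ D1 D2 * α m * β n * SGL3 1 (m : ℤ) (n : ℤ) 1 D1 D2

/-- `‖β‖ = (∑_n |β_n|²)^{1/2}`. -/
noncomputable def seqNorm (β : ℕ → ℂ) : ℝ := Real.sqrt (∑ᶠ n : ℕ, ‖β n‖ ^ 2)

/-! Rankin's trick: every counted `n` satisfies `1 ≤ (X / n) ^ ε`, so the count is at most
`X ^ ε * ∑ n ^ (-ε)`. Such `n` are determined by their exponent vectors on the fixed prime set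
`S = q.primeFactors`, all exponents positive, so the sum is at most
`∏ p ∈ S, p ^ (-ε) / (1 - p ^ (-ε))`. A factor exceeds `1` only when `p ^ ε < 2`, which leaves
finitely many primes depending on `ε` alone. -/

open Finset

lemma Nat.Prime.cast_rpow_neg_lt_one {p : ℕ} (hp : p.Prime) {ε : ℝ} (hε : 0 < ε) :
    (p : ℝ) ^ (-ε) < 1 :=
  Real.rpow_lt_one_of_one_lt_of_neg (by exact_mod_cast hp.one_lt) (neg_neg_of_pos hε)

lemma Nat.cast_rpow_eq_prod_primeFactors {n : ℕ} (hn : n ≠ 0) (s : ℝ) :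
    (n : ℝ) ^ s = ∏ p ∈ n.primeFactors, ((p : ℝ) ^ s) ^ n.factorization p := by
  conv_lhs => rw [Nat.prod_primeFactors_pow_factorization hn]
  push_cast
  rw [← Real.finsetProd_rpow _ _ fun p _ => by positivity]
  exact prod_congr rfl fun p _ => (Real.rpow_pow_comm (by positivity) _ _).symm

lemma card_le_rpow_mul_sum_rpow_neg {T : Finset ℕ} {X ε : ℝ} (hε : 0 ≤ ε)
    (hT : ∀ n ∈ T, n ≠ 0 ∧ (n : ℝ) ≤ X) :
    (#T : ℝ) ≤ X ^ ε * ∑ n ∈ T, (n : ℝ) ^ (-ε) := by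
  rw [card_eq_sum_ones, Nat.cast_sum, mul_sum]
  refine sum_le_sum fun n hn => ?_
  have hn0 : (0 : ℝ) < n := by exact_mod_cast Nat.pos_of_ne_zero (hT n hn).1
  rw [Real.rpow_neg hn0.le, ← div_eq_mul_inv, Nat.cast_one, one_le_div (by positivity)]
  exact Real.rpow_le_rpow hn0.le (hT n hn).2 hε

lemma sum_rpow_le_prod_sum_pow {S T : Finset ℕ} (hT : ∀ n ∈ T, n ≠ 0 ∧ n.primeFactors = S)
    {N : ℕ} (hN : ∀ n ∈ T, n ≤ N) (s : ℝ) :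
    ∑ n ∈ T, (n : ℝ) ^ s ≤ ∏ p ∈ S, ∑ a ∈ Icc 1 N, ((p : ℝ) ^ s) ^ a := by
  rw [← prod_coe_sort S, prod_univ_sum]
  set φ : ℕ → S → ℕ := fun n p => n.factorization p
  have hφ : Set.InjOn φ T := fun n hn m hm hnm =>
    Nat.eq_of_factorization_eq (hT n hn).1 (hT m hm).1 fun p => by
      by_cases hp : p ∈ S
      · exact congrFun hnm ⟨p, hp⟩
      · rw [Finsupp.notMem_support_iff.1 (by rwa [Nat.support_factorization, (hT n hn).2]),
          Finsupp.notMem_support_iff.1 (by rwa [Nat.support_factorization, (hT m hm).2])]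
  have hmaps : ∀ n ∈ T, φ n ∈ Fintype.piFinset fun _ : S => Icc 1 N := by
    intro n hn
    refine Fintype.mem_piFinset.2 fun p => mem_Icc.2 ⟨?_, ?_⟩
    · have hp : (p : ℕ) ∈ n.factorization.support := by
        rw [Nat.support_factorization, (hT n hn).2]; exact p.2
      exact Nat.one_le_iff_ne_zero.2 (Finsupp.mem_support_iff.1 hp)
    · exact (Nat.factorization_lt p (hT n hn).1).le.trans (hN n hn)
  have hval : ∀ n ∈ T, (n : ℝ) ^ s = ∏ p : S, ((p : ℝ) ^ s) ^ φ n p := fun n hn => by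
    rw [Nat.cast_rpow_eq_prod_primeFactors (hT n hn).1, (hT n hn).2, ← prod_coe_sort S]
  calc ∑ n ∈ T, (n : ℝ) ^ s = ∑ n ∈ T, ∏ p : S, ((p : ℝ) ^ s) ^ φ n p := sum_congr rfl hval
    _ = ∑ v ∈ T.image φ, ∏ p : S, ((p : ℝ) ^ s) ^ v p :=
      (sum_image (f := fun v => ∏ p : S, ((p : ℝ) ^ s) ^ v p) hφ).symm
    _ ≤ _ := sum_le_sum_of_subset_of_nonneg (image_subset_iff.2 hmaps)
      fun _ _ _ => by positivity

lemma sum_rpow_neg_le_prod_geom {S T : Finset ℕ} (hS : ∀ p ∈ S, p.Prime)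
    (hT : ∀ n ∈ T, n ≠ 0 ∧ n.primeFactors = S) {ε : ℝ} (hε : 0 < ε) :
    ∑ n ∈ T, (n : ℝ) ^ (-ε) ≤ ∏ p ∈ S, (p : ℝ) ^ (-ε) / (1 - (p : ℝ) ^ (-ε)) := by
  refine (sum_rpow_le_prod_sum_pow hT (fun n hn => le_sup (f := id) hn) _).trans ?_
  refine prod_le_prod (fun _ _ => by positivity) fun p hp => ?_
  rw [← Ico_add_one_right_eq_Icc]
  exact (geom_sum_Ico_le_of_lt_one (by positivity) ((hS p hp).cast_rpow_neg_lt_one hε)).trans_eq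
    (by rw [pow_one])

lemma prod_le_prod_range_max_one {f : ℕ → ℝ} {S : Finset ℕ} (K : ℕ) (hf0 : ∀ p ∈ S, 0 ≤ f p)
    (hf1 : ∀ p ∈ S, K ≤ p → f p ≤ 1) : ∏ p ∈ S, f p ≤ ∏ p ∈ range K, max 1 (f p) :=
  calc ∏ p ∈ S, f p ≤ ∏ p ∈ S, max 1 (f p) := prod_le_prod hf0 fun _ _ => le_max_right _ _
    _ = ∏ p ∈ S.filter (· < K), max 1 (f p) := by
      refine (prod_subset (filter_subset _ _) fun p hp hpK => max_eq_left (hf1 p hp ?_)).symm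
      simpa [hp] using hpK
    _ ≤ ∏ p ∈ range K, max 1 (f p) :=
      prod_le_prod_of_subset_of_one_le (fun p hp => mem_range.2 (mem_filter.1 hp).2)
        (fun _ _ => zero_le_one.trans (le_max_left _ _)) fun _ _ _ => le_max_left _ _

lemma exists_prod_primes_rpow_neg_div_le {ε : ℝ} (hε : 0 < ε) :
    ∃ C > 0, ∀ S : Finset ℕ, (∀ p ∈ S, p.Prime) →
      ∏ p ∈ S, (p : ℝ) ^ (-ε) / (1 - (p : ℝ) ^ (-ε)) ≤ C := by
  refine ⟨∏ p ∈ range ⌈(2 : ℝ) ^ ε⁻¹⌉₊, max 1 ((p : ℝ) ^ (-ε) / (1 - (p : ℝ) ^ (-ε))),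
    by positivity, fun S hS => prod_le_prod_range_max_one _ (fun p hp => ?_) fun p hp hpK => ?_⟩
  · exact div_nonneg (by positivity) (by linarith [(hS p hp).cast_rpow_neg_lt_one hε])
  · have h2 : (2 : ℝ) ≤ (p : ℝ) ^ ε :=
      calc (2 : ℝ) = ((2 : ℝ) ^ ε⁻¹) ^ ε := by
            rw [← Real.rpow_mul zero_le_two, inv_mul_cancel₀ hε.ne', Real.rpow_one]
        _ ≤ (p : ℝ) ^ ε := by gcongr; exact (Nat.le_ceil _).trans (by exact_mod_cast hpK)
    have hhalf : (p : ℝ) ^ (-ε) ≤ 1 / 2 := by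
      rw [Real.rpow_neg (Nat.cast_nonneg p), ← one_div]
      exact one_div_le_one_div_of_le two_pos h2
    rw [div_le_one (by linarith)]
    linarith

/-- Divisor-type bound: the number of `n ≤ X` with the same set of prime divisors
as `q` is `≪_ε X^ε`. -/
theorem count_same_prime_divisors (ε : ℝ) (hε : 0 < ε) :
    ∃ C : ℝ, 0 < C ∧ ∀ X : ℝ, 1 ≤ X → ∀ q : ℕ, 0 < q → (q : ℝ) ≤ X →
      (((Finset.Icc 1 ⌊X⌋₊).filter (fun n => n.primeFactors = q.primeFactors)).card : ℝ) ≤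
        C * X ^ ε := by
  obtain ⟨C, hC, hbound⟩ := exists_prod_primes_rpow_neg_div_le hε
  refine ⟨C, hC, fun X hX q _ _ => ?_⟩
  set T := (Icc 1 ⌊X⌋₊).filter fun n => n.primeFactors = q.primeFactors
  have hT : ∀ n ∈ T, n ≠ 0 ∧ n ≤ ⌊X⌋₊ ∧ n.primeFactors = q.primeFactors := fun n hn => by
    simp only [T, mem_filter, mem_Icc] at hn
    exact ⟨by omega, hn.1.2, hn.2⟩
  calc (#T : ℝ) ≤ X ^ ε * ∑ n ∈ T, (n : ℝ) ^ (-ε) :=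
        card_le_rpow_mul_sum_rpow_neg hε.le fun n hn =>
          ⟨(hT n hn).1, (Nat.le_floor_iff (by linarith)).1 (hT n hn).2.1⟩
    _ ≤ X ^ ε * ∏ p ∈ q.primeFactors, (p : ℝ) ^ (-ε) / (1 - (p : ℝ) ^ (-ε)) := by
        gcongr
        exact sum_rpow_neg_le_prod_geom (fun _ => Nat.prime_of_mem_primeFactors)
          (fun n hn => ⟨(hT n hn).1, (hT n hn).2.2⟩) hε
    _ ≤ X ^ ε * C := by
        gcongr
        exact hbound _ fun p => Nat.prime_of_mem_primeFactors
    _ = C * X ^ ε := mul_comm _ _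
end

section
/- There exists an absolute constant C > 0 with the following property. For all real B ≥ 1 and Y ≥ 1, all integers N and M ≥ 1, and all complex numbers b_m (N ≤ m < N + M): ∫_1^2 Σ_{b ≤ B} Σ_{x mod b, gcd(x,b)=1} | Σ_{N ≤ m < N+M} b_m e(xm/b) e(tm/Y) |² dt ≤ C (B² + Y) Σ_{N ≤ m < N+M} |b_m|². -/
/-!
With `F u = ∑ₘ b_m e(m u)`, the integrand is `∑_{x/q} |F (x/q + t/Y)|²`, so substituting
`u = x/q + t/Y` turns the left side into `Y` times the sum of the integrals of `|F|²` over the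
intervals `(x/q + 1/Y, x/q + 2/Y]`. Distinct Farey fractions of order `B` are `1/B²` apart, so
each point lies in at most `B²/Y + 1` of these intervals, and all of them lie in `(0, 3]`.
Parseval's identity over these three periods gives `∫₀³ |F|² = 3 ∑ |b_m|²`, whence `C = 3`.
-/

open scoped BigOperators

open Finset MeasureTheory

lemma eC_add (x y : ℝ) : eC (x + y) = eC x * eC y := by
  rw [eC, eC, eC, ← Complex.exp_add]
  push_cast
  ring_nf

lemma conj_eC (x : ℝ) : starRingEnd ℂ (eC x) = eC (-x) := by
  rw [eC, eC, ← Complex.exp_conj]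
  simp [map_ofNat]

@[fun_prop]
lemma continuous_eC : Continuous eC := by
  unfold eC
  fun_prop

lemma integral_eC_int_mul (k : ℤ) (n : ℕ) :
    ∫ u in (0 : ℝ)..n, eC (k * u) = if k = 0 then (n : ℂ) else 0 := by
  split_ifs with hk
  · simp [hk, eC]
  have hc : 2 * Real.pi * Complex.I * k ≠ 0 := by simp [Real.pi_ne_zero, hk]
  have hexp : Complex.exp (2 * Real.pi * Complex.I * k * n) = 1 := by
    rw [← Complex.exp_int_mul_two_pi_mul_I (k * n)]
    push_cast
    ring_nf
  simp only [eC, Complex.ofReal_mul, Complex.ofReal_intCast, ← mul_assoc]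
  rw [integral_exp_mul_complex hc]
  simp [hexp]

lemma integral_norm_sq_sum_eC {ι : Type*} (s : Finset ι) (k : ι → ℤ) (hk : Set.InjOn k s)
    (c : ι → ℂ) (n : ℕ) :
    ∫ u in (0 : ℝ)..n, ‖∑ i ∈ s, c i * eC (k i * u)‖ ^ 2 = n * ∑ i ∈ s, ‖c i‖ ^ 2 := by
  classical
  have hexpand : ∀ u : ℝ, ((‖∑ i ∈ s, c i * eC (k i * u)‖ ^ 2 : ℝ) : ℂ) =
      ∑ i ∈ s, ∑ j ∈ s, c i * starRingEnd ℂ (c j) * eC ((k i - k j : ℤ) * u) := by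
    intro u
    rw [Complex.ofReal_pow, ← Complex.mul_conj', map_sum, sum_mul_sum]
    refine sum_congr rfl fun i _ => sum_congr rfl fun j _ => ?_
    rw [map_mul, conj_eC, show ((k i - k j : ℤ) : ℝ) * u = k i * u + -(k j * u) by push_cast; ring,
      eC_add]
    ring
  have hint : ∀ i j, IntervalIntegrable
      (fun u : ℝ => c i * starRingEnd ℂ (c j) * eC ((k i - k j : ℤ) * u)) volume 0 n :=
    fun i j => (by fun_prop : Continuous _).intervalIntegrable _ _
  have horth : ∀ i ∈ s, ∀ j ∈ s,
      ∫ u in (0 : ℝ)..n, c i * starRingEnd ℂ (c j) * eC ((k i - k j : ℤ) * u) =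
        if i = j then ((n * ‖c i‖ ^ 2 : ℝ) : ℂ) else 0 := by
    intro i hi j hj
    rw [intervalIntegral.integral_const_mul, integral_eC_int_mul]
    by_cases hij : i = j
    · subst hij
      simp [Complex.mul_conj', mul_comm]
    · simp [hij, sub_eq_zero, hk.ne hi hj hij]
  apply Complex.ofReal_injective
  rw [← intervalIntegral.integral_ofReal, intervalIntegral.integral_congr fun u _ => hexpand u,
    intervalIntegral.integral_finsetSum fun i _ =>
      (by fun_prop : Continuous _).intervalIntegrable _ _]
  rw [sum_congr rfl fun i _ => intervalIntegral.integral_finsetSum fun j _ => hint i j]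
  rw [sum_congr rfl fun i hi =>
    (sum_congr rfl fun j hj => horth i hi j hj).trans (sum_ite_eq s i _)]
  push_cast
  rw [mul_sum]
  exact sum_congr rfl fun i hi => by simp [hi]

lemma card_le_div_add_one_of_separated {ι : Type*} (s : Finset ι) (f : ι → ℝ) {δ a L : ℝ}
    (hδ : 0 < δ) (hL : 0 ≤ L) (hf : ∀ i ∈ s, f i ∈ Set.Icc a (a + L))
    (hsep : ∀ i ∈ s, ∀ j ∈ s, i ≠ j → δ ≤ |f i - f j|) :
    (#s : ℝ) ≤ L / δ + 1 := by
  have hpos : ∀ i ∈ s, 0 ≤ (f i - a) / δ := fun i hi => div_nonneg (by linarith [(hf i hi).1]) hδ.le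
  have hmaps : Set.MapsTo (fun i => ⌊(f i - a) / δ⌋₊) s (range (⌊L / δ⌋₊ + 1)) := by
    intro i hi
    rw [coe_range, Set.mem_Iio, Nat.lt_succ_iff]
    exact Nat.floor_le_floor (div_le_div_of_nonneg_right (by linarith [(hf i hi).2]) hδ.le)
  have hinj : Set.InjOn (fun i => ⌊(f i - a) / δ⌋₊) s := by
    intro i hi j hj hij
    by_contra hne
    have hi₁ := Nat.floor_le (hpos i hi)
    have hi₂ := Nat.lt_floor_add_one ((f i - a) / δ)
    have hj₁ := Nat.floor_le (hpos j hj)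
    have hj₂ := Nat.lt_floor_add_one ((f j - a) / δ)
    simp only at hij
    rw [hij] at hi₁ hi₂
    have hclose : |(f i - a) / δ - (f j - a) / δ| < 1 := abs_sub_lt_iff.2 ⟨by linarith, by linarith⟩
    rw [← sub_div, sub_sub_sub_cancel_right, abs_div, abs_of_pos hδ, div_lt_one hδ] at hclose
    exact (hsep i hi j hj hne).not_gt hclose
  calc (#s : ℝ) ≤ ⌊L / δ⌋₊ + 1 := by
        exact_mod_cast card_range _ ▸ card_le_card_of_injOn _ hmaps hinj
    _ ≤ L / δ + 1 := by gcongr; exact Nat.floor_le (div_nonneg hL hδ.le)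

/-- The Farey fractions `x / q` of order `Q` in `[0, 1)`, as pairs `(q, x)`. -/
def fareyPairs (Q : ℕ) : Finset ((_ : ℕ) × ℕ) :=
  (Icc 1 Q).sigma fun q => (range q).filter fun x => Nat.gcd x q = 1

lemma div_mem_Ico_of_mem_fareyPairs {Q : ℕ} {p : (_ : ℕ) × ℕ} (hp : p ∈ fareyPairs Q) :
    (p.2 : ℝ) / p.1 ∈ Set.Ico 0 1 := by
  simp only [fareyPairs, mem_sigma, mem_Icc, mem_filter, mem_range] at hp
  have hq : (0 : ℝ) < p.1 := by exact_mod_cast hp.1.1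
  exact ⟨by positivity, (div_lt_one hq).2 (by exact_mod_cast hp.2.1)⟩

lemma one_div_sq_le_abs_sub_of_mem_fareyPairs {Q : ℕ} {p p' : (_ : ℕ) × ℕ}
    (hp : p ∈ fareyPairs Q) (hp' : p' ∈ fareyPairs Q) (hne : p ≠ p') :
    1 / (Q : ℝ) ^ 2 ≤ |(p.2 : ℝ) / p.1 - (p'.2 : ℝ) / p'.1| := by
  obtain ⟨q, x⟩ := p
  obtain ⟨q', x'⟩ := p'
  simp only [fareyPairs, mem_sigma, mem_Icc, mem_filter, mem_range] at hp hp'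
  have hq : (0 : ℝ) < q := by exact_mod_cast hp.1.1
  have hq' : (0 : ℝ) < q' := by exact_mod_cast hp'.1.1
  have hcross : (x * q' - x' * q : ℤ) ≠ 0 := by
    intro h
    have hrat : ((x : ℤ) : ℚ) / (q : ℤ) = ((x' : ℤ) : ℚ) / (q' : ℤ) := by
      rw [div_eq_div_iff (by exact_mod_cast hq.ne') (by exact_mod_cast hq'.ne')]
      exact_mod_cast sub_eq_zero.1 h
    obtain ⟨hxx, hqq⟩ := Rat.div_int_inj (by exact_mod_cast hp.1.1) (by exact_mod_cast hp'.1.1)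
      (by simpa using hp.2.2) (by simpa using hp'.2.2) hrat
    exact hne (by rw [Nat.cast_inj.1 hxx, Nat.cast_inj.1 hqq])
  have hdiff : (x : ℝ) / q - (x' : ℝ) / q' = ((x * q' - x' * q : ℤ) : ℝ) / (q * q') := by
    push_cast
    field_simp
  have hqq' : (0 : ℝ) < q * q' := mul_pos hq hq'
  have hQ : (0 : ℝ) < Q := hq.trans_le (by exact_mod_cast hp.1.2)
  rw [hdiff, abs_div, abs_of_pos hqq', div_le_div_iff₀ (by positivity) hqq', one_mul]
  calc (q : ℝ) * q' ≤ Q * Q := by gcongr <;> exact_mod_cast (by omega)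
    _ = 1 * Q ^ 2 := by ring
    _ ≤ |((x * q' - x' * q : ℤ) : ℝ)| * Q ^ 2 := by
        gcongr; exact_mod_cast Int.one_le_abs hcross

lemma sum_setIntegral_le_mul_setIntegral {α ι : Type*} [MeasurableSpace α] {μ : Measure α}
    (s : Finset ι) {A : ι → Set α} [∀ x, DecidablePred (x ∈ A ·)] {S : Set α}
    (hA : ∀ i ∈ s, MeasurableSet (A i))
    (hAS : ∀ i ∈ s, A i ⊆ S) (hS : MeasurableSet S) {K : ℝ}
    (hK : ∀ x ∈ S, (#{i ∈ s | x ∈ A i} : ℝ) ≤ K) {h : α → ℝ} (h0 : ∀ x ∈ S, 0 ≤ h x)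
    (hint : IntegrableOn h S μ) :
    ∑ i ∈ s, ∫ x in A i, h x ∂μ ≤ K * ∫ x in S, h x ∂μ := by
  have hrestrict : ∀ i ∈ s, ∫ x in A i, h x ∂μ = ∫ x in S, (A i).indicator h x ∂μ := fun i hi => by
    rw [setIntegral_indicator (hA i hi), Set.inter_eq_right.2 (hAS i hi)]
  have hint' : ∀ i ∈ s, IntegrableOn ((A i).indicator h) S μ := fun i hi => hint.indicator (hA i hi)
  rw [sum_congr rfl hrestrict, ← integral_finsetSum s hint', ← integral_const_mul]
  refine setIntegral_mono_on (integrable_finsetSum s hint') (hint.const_mul K) hS fun x hx => ?_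
  simp only [Set.indicator_apply]
  rw [← sum_filter, sum_const, nsmul_eq_mul]
  exact mul_le_mul_of_nonneg_right (hK x hx) (h0 x hx)

lemma integral_sum_comp_add_div_le_of_separated {ι : Type*} (s : Finset ι) (α : ι → ℝ)
    {δ Y : ℝ} (hδ : 0 < δ) (hY : 1 ≤ Y) (hα : ∀ i ∈ s, α i ∈ Set.Ico 0 1)
    (hsep : ∀ i ∈ s, ∀ j ∈ s, i ≠ j → δ ≤ |α i - α j|) {h : ℝ → ℝ} (hh : Continuous h)
    (h0 : ∀ u, 0 ≤ h u) :
    ∫ t in (1 : ℝ)..2, ∑ i ∈ s, h (α i + t / Y) ≤ (1 / δ + Y) * ∫ u in Set.Ioc 0 3, h u := by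
  have hY0 : 0 < Y := by linarith
  set I : ι → Set ℝ := fun i => Set.Ioc (α i + 1 / Y) (α i + 2 / Y)
  have hmult : ∀ u, (#{i ∈ s | u ∈ I i} : ℝ) ≤ 1 / Y / δ + 1 := by
    intro u
    refine card_le_div_add_one_of_separated _ α (a := u - 2 / Y) hδ (by positivity)
      (fun i hi => ?_) fun i hi j hj => hsep i (mem_filter.1 hi).1 j (mem_filter.1 hj).1
    obtain ⟨hu₁, hu₂⟩ := (mem_filter.1 hi).2
    have h2 : 2 / Y = 2 * (1 / Y) := by ring
    constructor <;> linarith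
  have hsub : ∀ i ∈ s, I i ⊆ Set.Ioc 0 3 := by
    intro i hi
    obtain ⟨h₀, h₁⟩ := hα i hi
    have : 2 / Y ≤ 2 := div_le_self zero_le_two hY
    exact Set.Ioc_subset_Ioc (by positivity) (by linarith)
  calc _ = Y * ∑ i ∈ s, ∫ u in I i, h u := by
        rw [intervalIntegral.integral_finsetSum fun i _ =>
          Continuous.intervalIntegrable (by fun_prop) _ _, mul_sum]
        refine sum_congr rfl fun i _ => ?_
        rw [intervalIntegral.integral_comp_add_div h hY0.ne', smul_eq_mul,
          intervalIntegral.integral_of_le (by gcongr; norm_num)]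
    _ ≤ Y * ((1 / Y / δ + 1) * ∫ u in Set.Ioc 0 3, h u) := by
        gcongr
        exact sum_setIntegral_le_mul_setIntegral _ (fun _ _ => measurableSet_Ioc) hsub
          measurableSet_Ioc (fun u _ => hmult u) (fun _ _ => h0 _) hh.integrableOn_Ioc
    _ = (1 / δ + Y) * ∫ u in Set.Ioc 0 3, h u := by
        field_simp

lemma sum_norm_sq_eq_sum_fareyPairs (Q : ℕ) (N : ℤ) (M : ℕ) (b : ℤ → ℂ) (t Y : ℝ) :
    ∑ q ∈ Icc 1 Q, ∑ x ∈ (range q).filter (fun x => Nat.gcd x q = 1),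
      ‖∑ m ∈ range M, b (N + m) * eC ((((x : ℤ) * (N + m) : ℤ) : ℝ) / (q : ℝ)) *
        eC (t * (((N + m : ℤ)) : ℝ) / Y)‖ ^ 2 =
    ∑ p ∈ fareyPairs Q,
      ‖∑ m ∈ range M, b (N + m) * eC (((N + m : ℤ) : ℝ) * ((p.2 : ℝ) / p.1 + t / Y))‖ ^ 2 := by
  rw [fareyPairs, sum_sigma]
  refine sum_congr rfl fun q _ => sum_congr rfl fun x _ => ?_
  congr 2
  refine sum_congr rfl fun m _ => ?_
  rw [mul_assoc, ← eC_add]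
  congr 2
  push_cast
  ring

/-- A hybrid large sieve inequality. -/
theorem hybrid_large_sieve :
    ∃ C : ℝ, 0 < C ∧ ∀ (B Y : ℝ), 1 ≤ B → 1 ≤ Y → ∀ (N : ℤ) (M : ℕ), 1 ≤ M →
      ∀ b : ℤ → ℂ,
        (∫ t in (1 : ℝ)..2,
          ∑ q ∈ Finset.Icc 1 ⌊B⌋₊,
            ∑ x ∈ (Finset.range q).filter (fun x => Nat.gcd x q = 1),
              (‖∑ m ∈ Finset.range M,
                b (N + m) * eC ((((x : ℤ) * (N + m) : ℤ) : ℝ) / (q : ℝ)) *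
                  eC (t * (((N + m : ℤ)) : ℝ) / Y)‖) ^ 2) ≤
        C * (B ^ 2 + Y) * ∑ m ∈ Finset.range M, ‖b (N + m)‖ ^ 2 := by
  refine ⟨3, by norm_num, fun B Y hB hY N M _ b => ?_⟩
  set F : ℝ → ℂ := fun u => ∑ m ∈ range M, b (N + m) * eC (((N + m : ℤ) : ℝ) * u)
  have hQ : (0 : ℝ) < ⌊B⌋₊ := by exact_mod_cast Nat.floor_pos.2 hB
  have hQB : (⌊B⌋₊ : ℝ) ^ 2 ≤ B ^ 2 := by gcongr; exact Nat.floor_le (by linarith)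
  have hparseval : ∫ u in (0 : ℝ)..3, ‖F u‖ ^ 2 = 3 * ∑ m ∈ range M, ‖b (N + m)‖ ^ 2 := by
    exact_mod_cast integral_norm_sq_sum_eC (range M) (fun m => N + m)
      (fun m _ n _ h => by simpa using h) (fun m => b (N + m)) 3
  rw [intervalIntegral.integral_congr fun t _ => sum_norm_sq_eq_sum_fareyPairs _ N M b t Y]
  calc _ ≤ (1 / (1 / (⌊B⌋₊ : ℝ) ^ 2) + Y) * ∫ u in Set.Ioc 0 3, ‖F u‖ ^ 2 :=
        integral_sum_comp_add_div_le_of_separated _ _ (by positivity) hY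
          (fun p hp => div_mem_Ico_of_mem_fareyPairs hp)
          (fun p hp p' hp' => one_div_sq_le_abs_sub_of_mem_fareyPairs hp hp')
          (by fun_prop) fun _ => by positivity
    _ ≤ (B ^ 2 + Y) * (3 * ∑ m ∈ range M, ‖b (N + m)‖ ^ 2) := by
        rw [one_div_one_div, ← intervalIntegral.integral_of_le zero_le_three, hparseval]
        gcongr
    _ = 3 * (B ^ 2 + Y) * ∑ m ∈ range M, ‖b (N + m)‖ ^ 2 := by ring
end

section
/- Let p be a prime and a, b, u, t integers with gcd(ab, p) = 1. Then Ŝ(a, u, t, b, p, p) = 1 if p ∤ t and p ∤ u; Ŝ(a, u, t, b, p, p) = p if p | t and p | u; and Ŝ(a, u, t, b, p, p) = 0 otherwise. -/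
open scoped BigOperators

/-! Summing the Fourier phases over `x` and `y` first, orthogonality of additive characters turns
`Ŝ` into `(D₁D₂)⁻¹` times a sum over the admissible tuples that also satisfy `B₂ ≡ u` and
`Z₁B₂ ≡ -t`. For `D₁ = D₂ = p` this is a polynomial system over `𝔽_p`, which has no solution
unless `t ≡ 0 ↔ u ≡ 0`. If `t, u ≢ 0` it forces `B₁ = 0`, and its solutions form a two-parameter
family `(Y₁, Z₂)` with trivial phase, so the sum is `p²`. If `t ≡ u ≡ 0` the solutions are
parametrised by `Z₂ ≠ 0` and free `B₁, Y₁, Y₂`, with phase `e(B₁(a - bZ₂)/p)`; summing over `B₁`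
leaves only `Z₂ = a/b`, so the sum is `p³`. -/

open Finset

lemma sum_range_eq_sum_val {M : Type*} [AddCommMonoid M] (D : ℕ) [NeZero D] (f : ℕ → M) :
    ∑ n ∈ range D, f n = ∑ x : ZMod D, f x.val :=
  sum_nbij' (↑) ZMod.val (by simp) (by simp [ZMod.val_lt])
    (fun n hn => ZMod.val_cast_of_lt (mem_range.1 hn)) (fun x _ => ZMod.natCast_zmod_val x)
    (fun n hn => by rw [ZMod.val_cast_of_lt (mem_range.1 hn)])

lemma sum_ite_eq_sum_of_param {α β M : Type*} [Fintype α] [AddCommMonoid M] (P : α → Prop)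
    [DecidablePred P] (f : α → M) (T : Finset β) (g : β → α) (π : α → β)
    (hg : ∀ w ∈ T, P (g w) ∧ π (g w) = w) (hπ : ∀ v, P v → π v ∈ T ∧ g (π v) = v) :
    ∑ v, (if P v then f v else 0) = ∑ w ∈ T, f (g w) := by
  rw [← sum_filter]
  exact sum_nbij' π g (fun v hv => (hπ v (mem_filter.1 hv).2).1)
    (fun w hw => mem_filter.2 ⟨mem_univ _, (hg w hw).1⟩)
    (fun v hv => (hπ v (mem_filter.1 hv).2).2) (fun w hw => (hg w hw).2)
    (fun v hv => by rw [(hπ v (mem_filter.1 hv).2).2])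

noncomputable def eDiv (D : ℕ) (n : ℤ) : ℂ := eC ((n : ℝ) / D)

lemma eDiv_eq_stdAddChar (D : ℕ) [NeZero D] (n : ℤ) :
    eDiv D n = ZMod.stdAddChar (n : ZMod D) := by
  rw [ZMod.stdAddChar_coe, eDiv, eC]
  push_cast
  ring_nf

lemma eDiv_add (D : ℕ) (m n : ℤ) : eDiv D (m + n) = eDiv D m * eDiv D n := by
  simp only [eDiv, eC, ← Complex.exp_add]
  push_cast
  ring_nf

lemma sum_range_eDiv_mul (D : ℕ) (c : ℤ) :
    ∑ x ∈ range D, eDiv D (x * c) = if (D : ℤ) ∣ c then (D : ℂ) else 0 := by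
  rcases D.eq_zero_or_pos with rfl | hD
  · simp
  have : NeZero D := ⟨hD.ne'⟩
  rw [sum_range_eq_sum_val]
  simp only [eDiv_eq_stdAddChar, Int.cast_mul, Int.cast_natCast, ZMod.natCast_zmod_val,
    AddChar.sum_mulShift _ (ZMod.isPrimitive_stdAddChar D), ZMod.card,
    ZMod.intCast_zmod_eq_zero_iff_dvd, Nat.cast_ite, Nat.cast_zero]

lemma sum_sum_ite_eDiv_twist (D1 D2 : ℕ) (A : Prop) [Decidable A] (α β L M t u : ℤ) :
    ∑ x ∈ range D1, ∑ y ∈ range D2,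
        (if A then eDiv D1 (α + x * L) * eDiv D2 (y * M + β) else 0) *
          (eDiv D1 (-(x * t)) * eDiv D2 (-(y * u))) =
      D1 * D2 * if A ∧ (D1 : ℤ) ∣ L - t ∧ (D2 : ℤ) ∣ M - u then eDiv D1 α * eDiv D2 β else 0 := by
  by_cases hA : A
  swap
  · simp [hA]
  have hsplit (x y : ℕ) :
      eDiv D1 (α + x * L) * eDiv D2 (y * M + β) * (eDiv D1 (-(x * t)) * eDiv D2 (-(y * u))) =
        eDiv D1 α * eDiv D2 β * (eDiv D1 (x * (L - t)) * eDiv D2 (y * (M - u))) := by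
    rw [show (x : ℤ) * (L - t) = x * L + -(x * t) by ring,
      show (y : ℤ) * (M - u) = y * M + -(y * u) by ring]
    simp only [eDiv_add]
    ring
  calc _ = eDiv D1 α * eDiv D2 β *
        ((∑ x ∈ range D1, eDiv D1 (x * (L - t))) * ∑ y ∈ range D2, eDiv D2 (y * (M - u))) := by
        rw [sum_mul_sum, mul_sum]
        simp only [hA, if_true, hsplit, mul_sum]
    _ = _ := by
        rw [sum_range_eDiv_mul, sum_range_eDiv_mul, ite_zero_mul_ite_zero, mul_ite, mul_zero,
          mul_ite, mul_zero, mul_comm (eDiv D1 α * eDiv D2 β)]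
        simp only [and_iff_right hA]

abbrev Tuple8 (α : Type*) := α × α × α × α × α × α × α × α

def klTuples (D1 D2 : ℕ) : Finset (Tuple8 ℕ) :=
  range D1 ×ˢ range D1 ×ˢ range D2 ×ˢ range D2 ×ˢ range D1 ×ˢ range D1 ×ˢ range D2 ×ˢ range D2

abbrev KlAdmissible (D1 D2 B1 C1 B2 C2 Y1 Z1 Y2 Z2 : ℕ) : Prop :=
  Nat.gcd B1 (Nat.gcd C1 D1) = 1 ∧ Nat.gcd B2 (Nat.gcd C2 D2) = 1 ∧
    ((D1 : ℤ) * (D2 : ℤ)) ∣ ((D1 : ℤ) * (C2 : ℤ) + (B1 : ℤ) * (B2 : ℤ) + (C1 : ℤ) * (D2 : ℤ)) ∧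
    (D1 : ℤ) ∣ ((Y1 : ℤ) * (B1 : ℤ) + (Z1 : ℤ) * (C1 : ℤ) - 1) ∧
    (D2 : ℤ) ∣ ((Y2 : ℤ) * (B2 : ℤ) + (Z2 : ℤ) * (C2 : ℤ) - 1)

lemma SGL3_eq_sum_klTuples (m1 m2 n1 n2 : ℤ) (D1 D2 : ℕ) :
    SGL3 m1 m2 n1 n2 D1 D2 = ((D1 : ℂ) * D2)⁻¹ *
      ∑ ⟨B1, C1, B2, C2, Y1, Z1, Y2, Z2⟩ ∈ klTuples D1 D2,
        if KlAdmissible D1 D2 B1 C1 B2 C2 Y1 Z1 Y2 Z2 then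
          eDiv D1 (m1 * B1 + n1 * (Y1 * D2 - Z1 * B2)) *
            eDiv D2 (m2 * B2 + n2 * (Y2 * D1 - Z2 * B1))
        else 0 := by
  simp only [klTuples, sum_product]
  rfl

lemma Shat_eq_sum_klTuples (a u t b : ℤ) (D1 D2 : ℕ) :
    Shat a u t b D1 D2 = ((D1 : ℂ) * D2)⁻¹ *
      ∑ ⟨B1, C1, B2, C2, Y1, Z1, Y2, Z2⟩ ∈ klTuples D1 D2,
        if KlAdmissible D1 D2 B1 C1 B2 C2 Y1 Z1 Y2 Z2 ∧
            (D1 : ℤ) ∣ Y1 * D2 - Z1 * B2 - t ∧ (D2 : ℤ) ∣ B2 - u then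
          eDiv D1 (a * B1) * eDiv D2 (b * (Y2 * D1 - Z2 * B1))
        else 0 := by
  rcases eq_or_ne ((D1 : ℂ) * D2) 0 with hD | hD
  · simp [Shat, hD]
  have hShat : Shat a u t b D1 D2 = ((D1 : ℂ) * D2)⁻¹ * ∑ x ∈ range D1, ∑ y ∈ range D2,
      SGL3 a y x b D1 D2 * eDiv D1 (-(x * t)) * eDiv D2 (-(y * u)) := rfl
  rw [hShat]
  congr 1
  simp only [SGL3_eq_sum_klTuples, sum_mul, mul_sum]
  conv_lhs => enter [2, x]; rw [sum_comm]
  rw [sum_comm]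
  refine sum_congr rfl fun ⟨B1, C1, B2, C2, Y1, Z1, Y2, Z2⟩ _ => ?_
  simp only [mul_assoc, ← mul_sum]
  rw [sum_sum_ite_eDiv_twist, inv_mul_cancel_left₀ hD]

section FiniteField

variable {F : Type*} [Field F]

def KlSystem (t u : F) : Tuple8 F → Prop
  | (B1, C1, B2, C2, Y1, Z1, Y2, Z2) =>
    B1 * B2 = 0 ∧ C1 + C2 = 0 ∧ Y1 * B1 + Z1 * C1 = 1 ∧ Y2 * B2 + Z2 * C2 = 1 ∧
      Z1 * B2 + t = 0 ∧ B2 = u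

open Classical in
noncomputable def klSum [Fintype F] (ψ : AddChar F ℂ) (a b t u : F) : ℂ :=
  ∑ v : Tuple8 F, if KlSystem t u v then
    (match v with | (B1, _, _, _, _, _, _, Z2) => ψ (B1 * (a - b * Z2))) else 0

variable {a b t u : F}

lemma KlSystem.eq_zero_iff {v : Tuple8 F} (h : KlSystem t u v) : t = 0 ↔ u = 0 := by
  obtain ⟨B1, C1, B2, C2, Y1, Z1, Y2, Z2⟩ := v
  obtain ⟨hB, -, h1, -, ht, rfl⟩ := h
  constructor
  · rintro rfl
    by_contra hB2
    have hB1 : B1 = 0 := (mul_eq_zero.1 hB).resolve_right hB2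
    have hZ1 : Z1 = 0 := (mul_eq_zero.1 (add_zero (Z1 * B2) ▸ ht)).resolve_right hB2
    simp [hB1, hZ1] at h1
  · rintro rfl
    simpa using ht

lemma klSystem_iff_of_ne_zero (ht : t ≠ 0) (hu : u ≠ 0) (B1 C1 B2 C2 Y1 Z1 Y2 Z2 : F) :
    KlSystem t u (B1, C1, B2, C2, Y1, Z1, Y2, Z2) ↔
      B1 = 0 ∧ C1 = -(u / t) ∧ B2 = u ∧ C2 = u / t ∧ Z1 = -(t / u) ∧
        Y2 = (1 - Z2 * (u / t)) / u := by
  constructor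
  · rintro ⟨hB, hC, h1, h2, h3, hBu⟩
    subst B2
    have hB1 : B1 = 0 := (mul_eq_zero.1 hB).resolve_right hu
    subst hB1
    have hZ1 : Z1 = -(t / u) := by field_simp; linear_combination h3
    have hC1 : C1 = -(u / t) := by
      subst hZ1
      field_simp at h1 ⊢
      linear_combination -h1
    have hC2 : C2 = u / t := by linear_combination hC - hC1
    refine ⟨rfl, hC1, rfl, hC2, hZ1, ?_⟩
    rw [eq_div_iff hu]
    linear_combination h2 - Z2 * hC2
  · rintro ⟨rfl, rfl, rfl, rfl, rfl, rfl⟩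
    refine ⟨zero_mul _, by ring, ?_, ?_, ?_, rfl⟩ <;> field_simp <;> ring

lemma klSystem_zero_zero_iff (B1 C1 B2 C2 Y1 Z1 Y2 Z2 : F) :
    KlSystem 0 0 (B1, C1, B2, C2, Y1, Z1, Y2, Z2) ↔
      Z2 ≠ 0 ∧ C1 = -Z2⁻¹ ∧ B2 = 0 ∧ C2 = Z2⁻¹ ∧ Z1 = -(Z2 * (1 - Y1 * B1)) := by
  constructor
  · rintro ⟨-, hC, h1, h2, -, rfl⟩
    have hZ2 : Z2 ≠ 0 := left_ne_zero_of_mul_eq_one (by simpa using h2)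
    have hC2 : C2 = Z2⁻¹ := by field_simp; linear_combination h2
    have hC1 : C1 = -Z2⁻¹ := by linear_combination hC - hC2
    refine ⟨hZ2, hC1, rfl, hC2, ?_⟩
    rw [hC1] at h1
    field_simp at h1
    linear_combination -h1
  · rintro ⟨hZ2, rfl, rfl, rfl, rfl⟩
    refine ⟨mul_zero _, by ring, ?_, ?_, by ring, rfl⟩ <;> field_simp <;> ring

variable [Fintype F] (ψ : AddChar F ℂ)

lemma klSum_eq_zero (h : ¬(t = 0 ↔ u = 0)) : klSum ψ a b t u = 0 :=
  sum_eq_zero fun _ _ => if_neg fun hv => h hv.eq_zero_iff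

lemma klSum_of_ne_zero (ht : t ≠ 0) (hu : u ≠ 0) : klSum ψ a b t u = Fintype.card F ^ 2 := by
  classical
  rw [klSum, sum_ite_eq_sum_of_param _ _ (univ : Finset (F × F))
    (fun w => (0, -(u / t), u, u / t, w.1, -(t / u), (1 - w.2 * (u / t)) / u, w.2))
    (fun v => (v.2.2.2.2.1, v.2.2.2.2.2.2.2))]
  · simp [sq]
  · exact fun w _ => ⟨(klSystem_iff_of_ne_zero ht hu ..).2 ⟨rfl, rfl, rfl, rfl, rfl, rfl⟩, rfl⟩
  · rintro ⟨B1, C1, B2, C2, Y1, Z1, Y2, Z2⟩ h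
    obtain ⟨rfl, rfl, rfl, rfl, rfl, rfl⟩ := (klSystem_iff_of_ne_zero ht hu ..).1 h
    exact ⟨mem_univ _, rfl⟩

lemma klSum_zero_zero (hψ : ψ.IsPrimitive) (ha : a ≠ 0) (hb : b ≠ 0) :
    klSum ψ a b 0 0 = Fintype.card F ^ 3 := by
  classical
  rw [klSum, sum_ite_eq_sum_of_param _ _ ((univ.filter (· ≠ 0)) ×ˢ (univ : Finset (F × F × F)))
    (fun w => (w.2.1, -w.1⁻¹, 0, w.1⁻¹, w.2.2.1, -(w.1 * (1 - w.2.2.1 * w.2.1)), w.2.2.2, w.1))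
    (fun v => (v.2.2.2.2.2.2.2, v.1, v.2.2.2.2.1, v.2.2.2.2.2.2.1))]
  · have hinner (Z2 : F) : ∑ B1 : F, ψ (B1 * (a - b * Z2)) =
        if Z2 = a / b then (Fintype.card F : ℂ) else 0 := by
      rw [AddChar.sum_mulShift _ hψ, Nat.cast_ite, Nat.cast_zero]
      congr 1
      rw [eq_div_iff hb, sub_eq_zero, mul_comm Z2 b]
      exact propext eq_comm
    simp only [sum_product, ← univ_product_univ, sum_const, card_product, card_univ, nsmul_eq_mul,
      ← mul_sum, hinner, mul_ite, mul_zero, sum_ite_eq', mem_filter, mem_univ, true_and, ne_eq,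
      div_eq_zero_iff, ha, hb, or_self, not_false_eq_true, if_true]
    push_cast
    ring
  · rintro ⟨Z2, B1, Y1, Y2⟩ hw
    have hZ2 : Z2 ≠ 0 := (mem_filter.1 (mem_product.1 hw).1).2
    exact ⟨(klSystem_zero_zero_iff ..).2 ⟨hZ2, rfl, rfl, rfl, rfl⟩, rfl⟩
  · rintro ⟨B1, C1, B2, C2, Y1, Z1, Y2, Z2⟩ h
    obtain ⟨hZ2, rfl, rfl, rfl, rfl⟩ := (klSystem_zero_zero_iff ..).1 h
    exact ⟨by simpa using hZ2, rfl⟩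

end FiniteField

lemma gcd_gcd_eq_one_of_dvd_sub_one {D B C : ℕ} {Y Z : ℤ} (h : (D : ℤ) ∣ Y * B + Z * C - 1) :
    Nat.gcd B (Nat.gcd C D) = 1 := by
  set g := Nat.gcd B (Nat.gcd C D)
  have hB : (g : ℤ) ∣ B := Int.natCast_dvd_natCast.2 (Nat.gcd_dvd_left _ _)
  have hC : (g : ℤ) ∣ C :=
    Int.natCast_dvd_natCast.2 ((Nat.gcd_dvd_right _ _).trans (Nat.gcd_dvd_left _ _))
  have hD : (g : ℤ) ∣ D :=
    Int.natCast_dvd_natCast.2 ((Nat.gcd_dvd_right _ _).trans (Nat.gcd_dvd_right _ _))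
  have h1 : (g : ℤ) ∣ 1 := by
    simpa using (dvd_add (hB.mul_left Y) (hC.mul_left Z)).sub (hD.trans h)
  exact Nat.dvd_one.1 (Int.natCast_dvd_natCast.1 h1)

lemma klAdmissible_iff (D1 D2 B1 C1 B2 C2 Y1 Z1 Y2 Z2 : ℕ) :
    KlAdmissible D1 D2 B1 C1 B2 C2 Y1 Z1 Y2 Z2 ↔
      ((D1 : ℤ) * D2 ∣ D1 * C2 + B1 * B2 + C1 * D2 ∧
        (D1 : ℤ) ∣ Y1 * B1 + Z1 * C1 - 1 ∧ (D2 : ℤ) ∣ Y2 * B2 + Z2 * C2 - 1) :=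
  ⟨fun ⟨_, _, h⟩ => h, fun ⟨h3, h4, h5⟩ =>
    ⟨gcd_gcd_eq_one_of_dvd_sub_one h4, gcd_gcd_eq_one_of_dvd_sub_one h5, h3, h4, h5⟩⟩

lemma mul_self_dvd_iff_zmod {p : ℕ} (hp : p.Prime) {B1 B2 : ℕ} (hB1 : B1 < p) (hB2 : B2 < p)
    (C1 C2 : ℕ) :
    (p : ℤ) * p ∣ p * C2 + B1 * B2 + C1 * p ↔
      ((B1 : ZMod p) * B2 = 0 ∧ (C1 : ZMod p) + C2 = 0) := by
  -- the representatives `B₁, B₂ < p` make `p ∣ B₁B₂` equivalent to `B₁B₂ = 0`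
  have hprod : (p : ℤ) ∣ B1 * B2 ↔ (B1 : ℤ) * B2 = 0 := by
    norm_cast
    rw [(Nat.prime_iff.1 hp).dvd_mul, mul_eq_zero]
    exact or_congr ⟨fun h => Nat.eq_zero_of_dvd_of_lt h hB1, fun h => h ▸ dvd_zero p⟩
      ⟨fun h => Nat.eq_zero_of_dvd_of_lt h hB2, fun h => h ▸ dvd_zero p⟩
  have hp0 : (p : ℤ) ≠ 0 := by exact_mod_cast hp.ne_zero
  have hB : (B1 : ZMod p) * B2 = 0 ↔ (B1 : ℤ) * B2 = 0 := by
    rw [← hprod, ← ZMod.intCast_zmod_eq_zero_iff_dvd]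
    push_cast
    rfl
  have hC : (C1 : ZMod p) + C2 = 0 ↔ (p : ℤ) ∣ C1 + C2 := by
    rw [← ZMod.intCast_zmod_eq_zero_iff_dvd]
    push_cast
    rfl
  rw [hB, hC]
  constructor
  · intro h
    have hBB : (B1 : ℤ) * B2 = 0 := hprod.1 <| by
      have hsum := (dvd_mul_right (p : ℤ) p).trans h
      rw [show (p : ℤ) * C2 + B1 * B2 + C1 * p = p * (C2 + C1) + B1 * B2 by ring] at hsum
      exact (dvd_add_right (dvd_mul_right _ _)).1 hsum
    refine ⟨hBB, ?_⟩
    rw [show ((p : ℤ) * C2 + B1 * B2 + C1 * p) = p * (C1 + C2) by linear_combination hBB] at h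
    exact (mul_dvd_mul_iff_left hp0).1 h
  · rintro ⟨hBB, hC⟩
    rw [show ((p : ℤ) * C2 + B1 * B2 + C1 * p) = p * (C1 + C2) by linear_combination hBB]
    exact mul_dvd_mul_left _ hC

lemma klCongruences_iff_klSystem {p : ℕ} [hp : Fact p.Prime] (t u : ℤ) {B1 B2 : ℕ}
    (hB1 : B1 < p) (hB2 : B2 < p) (C1 C2 Y1 Z1 Y2 Z2 : ℕ) :
    (KlAdmissible p p B1 C1 B2 C2 Y1 Z1 Y2 Z2 ∧
        (p : ℤ) ∣ Y1 * p - Z1 * B2 - t ∧ (p : ℤ) ∣ B2 - u) ↔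
      KlSystem (t : ZMod p) (u : ZMod p)
        ((B1 : ZMod p), (C1 : ZMod p), (B2 : ZMod p), (C2 : ZMod p), (Y1 : ZMod p), (Z1 : ZMod p),
          (Y2 : ZMod p), (Z2 : ZMod p)) := by
  simp only [klAdmissible_iff, mul_self_dvd_iff_zmod hp.out hB1 hB2, KlSystem,
    ← ZMod.intCast_zmod_eq_zero_iff_dvd]
  push_cast [ZMod.natCast_self]
  constructor
  · rintro ⟨⟨⟨h1, h2⟩, h3, h4⟩, h5, h6⟩
    exact ⟨h1, h2, by linear_combination h3, by linear_combination h4, by linear_combination -h5,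
      by linear_combination h6⟩
  · rintro ⟨h1, h2, h3, h4, h5, h6⟩
    exact ⟨⟨⟨h1, h2⟩, by linear_combination h3, by linear_combination h4⟩,
      by linear_combination -h5, by linear_combination h6⟩

lemma Shat_prime_eq_klSum {p : ℕ} [hp : Fact p.Prime] (a u t b : ℤ) :
    Shat a u t b p p = ((p : ℂ) * p)⁻¹ * klSum (ZMod.stdAddChar (N := p)) a b t u := by
  rw [Shat_eq_sum_klTuples, klSum]
  congr 1
  refine sum_nbij'
    (fun ⟨B1, C1, B2, C2, Y1, Z1, Y2, Z2⟩ => ((B1 : ZMod p), (C1 : ZMod p), (B2 : ZMod p),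
      (C2 : ZMod p), (Y1 : ZMod p), (Z1 : ZMod p), (Y2 : ZMod p), (Z2 : ZMod p)))
    (fun ⟨B1, C1, B2, C2, Y1, Z1, Y2, Z2⟩ => (B1.val, C1.val, B2.val, C2.val, Y1.val, Z1.val,
      Y2.val, Z2.val)) (by simp) (by simp [klTuples, ZMod.val_lt]) ?_ (by simp) ?_
  · rintro ⟨B1, C1, B2, C2, Y1, Z1, Y2, Z2⟩ hv
    simp only [klTuples, mem_product, mem_range] at hv
    simp [Nat.mod_eq_of_lt, hv]
  · rintro ⟨B1, C1, B2, C2, Y1, Z1, Y2, Z2⟩ hv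
    simp only [klTuples, mem_product, mem_range] at hv
    classical
    refine if_congr (klCongruences_iff_klSystem t u hv.1 hv.2.2.1 _ _ _ _ _ _) ?_ rfl
    rw [eDiv_eq_stdAddChar, eDiv_eq_stdAddChar, ← AddChar.map_add_eq_mul]
    congr 1
    push_cast [ZMod.natCast_self]
    ring

/-- Evaluation of `Ŝ(a,u,t,b,p,p)`. -/
theorem Shat_prime_prime (p : ℕ) (hp : p.Prime) (a b u t : ℤ)
    (hab : Int.gcd (a * b) p = 1) :
    (¬ (p : ℤ) ∣ t → ¬ (p : ℤ) ∣ u → Shat a u t b p p = 1) ∧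
    ((p : ℤ) ∣ t → (p : ℤ) ∣ u → Shat a u t b p p = (p : ℂ)) ∧
    ((p : ℤ) ∣ t → ¬ (p : ℤ) ∣ u → Shat a u t b p p = 0) ∧
    (¬ (p : ℤ) ∣ t → (p : ℤ) ∣ u → Shat a u t b p p = 0) := by
  have : Fact p.Prime := ⟨hp⟩
  have hab0 : IsUnit ((a * b : ℤ) : ZMod p) := (ZMod.coe_int_isUnit_iff_isCoprime _ _).2
    (Int.isCoprime_iff_gcd_eq_one.2 (by rw [Int.gcd_comm]; exact_mod_cast hab))
  rw [Int.cast_mul] at hab0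
  obtain ⟨ha, hb⟩ := mul_ne_zero_iff.1 hab0.ne_zero
  have hp0 : (p : ℂ) ≠ 0 := Nat.cast_ne_zero.2 hp.ne_zero
  simp only [← ZMod.intCast_zmod_eq_zero_iff_dvd, Shat_prime_eq_klSum]
  refine ⟨fun ht hu => ?_, fun ht hu => ?_, fun ht hu => ?_, fun ht hu => ?_⟩
  · rw [klSum_of_ne_zero _ ht hu, ZMod.card]
    field_simp
  · rw [ht, hu, klSum_zero_zero _ (ZMod.isPrimitive_stdAddChar p) ha hb, ZMod.card]
    field_simp
  · rw [klSum_eq_zero _ (by simp [ht, hu]), mul_zero]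
  · rw [klSum_eq_zero _ (by simp [ht, hu]), mul_zero]
end
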